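/- arXiv:1905.04751 — 5 statements merged into one kernel-verified Lean document; each statement's English description precedes it below -/
import Mathlib

section
/- Rotation lemma: let u, v, w, y ∈ ℝ^2 be vectors with equal inner products ⟨u,v⟩ = ⟨w,y⟩. Then there exists a rotation R of ℝ^2 (an orthogonal 2×2 matrix with determinant 1) such that, writing Ru = (u_1,u_2)^⊤, Rv = (v_1,v_2)^⊤, Rw = (w_1,w_2)^⊤, Ry = (y_1,y_2)^⊤, one has u_1 v_1 = w_1 y_1 and u_2 v_2 = w_2 y_2. -/
/-!
Let `g θ` be the difference of the products of first coordinates after rotating by `θ`.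
A quarter turn swaps the two coordinates up to sign, and `⟨u,v⟩ = ⟨w,y⟩` says the two
differences of coordinate products cancel, so `g (π/2) = -g 0`. By the intermediate value
theorem `g` vanishes at some `θ`; since rotations preserve inner products, the products of
second coordinates then agree as well.
-/

open Matrix Real

theorem exists_eq_zero_of_apply_eq_neg {X α : Type*} [TopologicalSpace X] [PreconnectedSpace X]
    [AddCommGroup α] [LinearOrder α] [IsOrderedAddMonoid α] [TopologicalSpace α]
    [OrderClosedTopology α] {f : X → α} (hf : Continuous f) {a b : X} (hab : f b = -f a) :
    ∃ c, f c = 0 := by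
  rcases le_total (f a) 0 with ha | ha
  · exact intermediate_value_univ a b hf ⟨ha, by simpa [hab] using ha⟩
  · exact intermediate_value_univ b a hf ⟨by simpa [hab] using ha, ha⟩

theorem dotProduct_mulVec_mulVec_of_transpose_mul_self {n α : Type*} [Fintype n]
    [DecidableEq n] [CommSemiring α] {R : Matrix n n α} (hR : Rᵀ * R = 1) (x z : n → α) :
    R *ᵥ x ⬝ᵥ R *ᵥ z = x ⬝ᵥ z := by
  rw [dotProduct_comm, ← dotProduct_transpose_mulVec, mulVec_mulVec, hR, one_mulVec]

noncomputable def rotationMatrix (θ : ℝ) : Matrix (Fin 2) (Fin 2) ℝ :=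
  !![cos θ, -sin θ; sin θ, cos θ]

theorem rotationMatrix_transpose_mul_self (θ : ℝ) :
    (rotationMatrix θ)ᵀ * rotationMatrix θ = 1 := by
  have := sin_sq_add_cos_sq θ
  ext i j
  fin_cases i <;> fin_cases j <;> simp [rotationMatrix, mul_apply, Fin.sum_univ_two] <;> linarith

theorem det_rotationMatrix (θ : ℝ) : (rotationMatrix θ).det = 1 := by
  rw [rotationMatrix, det_fin_two_of]
  linarith [sin_sq_add_cos_sq θ]

theorem rotationMatrix_mulVec_zero (θ : ℝ) (x : Fin 2 → ℝ) :
    (rotationMatrix θ *ᵥ x) 0 = cos θ * x 0 - sin θ * x 1 := by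
  simp [rotationMatrix, mulVec, dotProduct, Fin.sum_univ_two]
  ring

/-- Rotation lemma: if `u, v, w, y ∈ ℝ²` satisfy `⟨u,v⟩ = ⟨w,y⟩`, then there is
a rotation `R` of ℝ² (orthogonal with determinant 1) such that the rotated
vectors satisfy `u₁v₁ = w₁y₁` and `u₂v₂ = w₂y₂`. -/
theorem rotation_lemma (u v w y : Fin 2 → ℝ) (h : u ⬝ᵥ v = w ⬝ᵥ y) :
    ∃ R : Matrix (Fin 2) (Fin 2) ℝ, Rᵀ * R = 1 ∧ R.det = 1 ∧
      (R *ᵥ u) 0 * (R *ᵥ v) 0 = (R *ᵥ w) 0 * (R *ᵥ y) 0 ∧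
      (R *ᵥ u) 1 * (R *ᵥ v) 1 = (R *ᵥ w) 1 * (R *ᵥ y) 1 := by
  set g : ℝ → ℝ := fun θ ↦ (rotationMatrix θ *ᵥ u) 0 * (rotationMatrix θ *ᵥ v) 0 -
    (rotationMatrix θ *ᵥ w) 0 * (rotationMatrix θ *ᵥ y) 0 with hg
  have hg_cont : Continuous g := by
    simp only [hg, rotationMatrix_mulVec_zero]
    fun_prop
  have hg_quarter : g (π / 2) = -g 0 := by
    rw [vec2_dotProduct, vec2_dotProduct] at h
    simp only [hg, rotationMatrix_mulVec_zero, cos_pi_div_two, sin_pi_div_two, cos_zero, sin_zero]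
    linear_combination h
  obtain ⟨θ, hθ⟩ := exists_eq_zero_of_apply_eq_neg hg_cont hg_quarter
  have hR := rotationMatrix_transpose_mul_self θ
  refine ⟨rotationMatrix θ, hR, det_rotationMatrix θ, sub_eq_zero.mp hθ, ?_⟩
  rw [← dotProduct_mulVec_mulVec_of_transpose_mul_self hR u v,
    ← dotProduct_mulVec_mulVec_of_transpose_mul_self hR w y,
    vec2_dotProduct, vec2_dotProduct] at h
  linear_combination h - sub_eq_zero.mp hθ
end

section
/- Complex form of the rotation lemma: let α, β, γ, δ be complex numbers with Re(α·conj(β)) = Re(γ·conj(δ)). Then there exists a real angle θ such that Re(e^{iθ}α)·Re(e^{iθ}β) = Re(e^{iθ}γ)·Re(e^{iθ}δ) and Im(e^{iθ}α)·Im(e^{iθ}β) = Im(e^{iθ}γ)·Im(e^{iθ}δ). -/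
/-!
For `z, w ∈ ℂ`, `Re z · Re w` and `Im z · Im w` are half the sum and half the difference of
`Re(z · conj w)` and `Re(z · w)`. Multiplying both numbers by `u = e^{iθ}` leaves `z · conj w`
unchanged and multiplies `z · w` by `u²`, so it suffices to pick `θ` with
`Re(u² (αβ - γδ)) = 0`, i.e. to rotate `αβ - γδ` onto the imaginary axis.
-/

open Complex

theorem re_mul_re_eq_and_im_mul_im_eq {z w z' w' : ℂ}
    (hmul : (z * w).re = (z' * w').re)
    (hconj : (z * starRingEnd ℂ w).re = (z' * starRingEnd ℂ w').re) :
    z.re * w.re = z'.re * w'.re ∧ z.im * w.im = z'.im * w'.im := by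
  simp only [mul_re, conj_re, conj_im] at hmul hconj
  constructor <;> linarith

theorem exp_mul_mul_conj_exp_mul (θ : ℝ) (z w : ℂ) :
    exp (θ * I) * z * starRingEnd ℂ (exp (θ * I) * w) = z * starRingEnd ℂ w := by
  have hunit : exp (θ * I) * starRingEnd ℂ (exp (θ * I)) = 1 := by
    rw [mul_conj, normSq_eq_norm_sq, norm_exp_ofReal_mul_I]; norm_num
  rw [map_mul]
  linear_combination (z * starRingEnd ℂ w) * hunit

theorem exists_re_exp_mul_I_mul_eq_zero (w : ℂ) : ∃ θ : ℝ, (exp (θ * I) * w).re = 0 := by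
  refine ⟨Real.pi / 2 - w.arg, ?_⟩
  have hrot : exp (↑(Real.pi / 2 - w.arg) * I) * w = ‖w‖ * I :=
    calc exp (↑(Real.pi / 2 - w.arg) * I) * w
        = ‖w‖ * exp (↑(Real.pi / 2 - w.arg) * I + w.arg * I) := by
          nth_rw 2 [← norm_mul_exp_arg_mul_I w]
          rw [exp_add]; ring
      _ = ‖w‖ * I := by
          rw [show (↑(Real.pi / 2 - w.arg) * I + w.arg * I : ℂ) = Real.pi / 2 * I by push_cast; ring,
            exp_pi_div_two_mul_I]
  rw [hrot]; simp

/-- Complex form of the rotation lemma: if `Re(α·conj β) = Re(γ·conj δ)`, then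
there is an angle `θ` such that the numbers rotated by `e^{iθ}` satisfy
`Re(e^{iθ}α)·Re(e^{iθ}β) = Re(e^{iθ}γ)·Re(e^{iθ}δ)` and
`Im(e^{iθ}α)·Im(e^{iθ}β) = Im(e^{iθ}γ)·Im(e^{iθ}δ)`. -/
theorem rotation_lemma_complex (α β γ δ : ℂ)
    (h : (α * (starRingEnd ℂ) β).re = (γ * (starRingEnd ℂ) δ).re) :
    ∃ θ : ℝ,
      (Complex.exp (θ * Complex.I) * α).re * (Complex.exp (θ * Complex.I) * β).re =
        (Complex.exp (θ * Complex.I) * γ).re * (Complex.exp (θ * Complex.I) * δ).re ∧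
      (Complex.exp (θ * Complex.I) * α).im * (Complex.exp (θ * Complex.I) * β).im =
        (Complex.exp (θ * Complex.I) * γ).im * (Complex.exp (θ * Complex.I) * δ).im := by
  obtain ⟨φ, hφ⟩ := exists_re_exp_mul_I_mul_eq_zero (α * β - γ * δ)
  refine ⟨φ / 2, re_mul_re_eq_and_im_mul_im_eq ?_ ?_⟩
  · set u := exp (↑(φ / 2) * I)
    have hsq : u * u = exp (φ * I) := by
      rw [← exp_add]; push_cast; ring_nf
    have hdiff : (u * α * (u * β)).re - (u * γ * (u * δ)).re = 0 := by
      rw [← sub_re, ← hφ, ← hsq]; ring_nf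
    linarith
  · rwa [exp_mul_mul_conj_exp_mul, exp_mul_mul_conj_exp_mul]
end

section
/- Every rank 1 element of the cone 𝒞 has the form v(x,y,z) v(x,y,z)^⊤: if A ∈ 𝒞 and A has rank 1, then there exist real numbers x, y, z such that A = v(x,y,z) v(x,y,z)^⊤. -/
open Matrix

/-- The vector `v(x,y,z) = (x², xy, xz, y², yz, z²)ᵀ ∈ ℝ⁶`. -/
def v (x y z : ℝ) : Fin 6 → ℝ := ![x ^ 2, x * y, x * z, y ^ 2, y * z, z ^ 2]

/-- Membership in the cone 𝒞 of 6×6 real positive semidefinite matrices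
satisfying `a₁₄ = a₂₂`, `a₁₅ = a₂₃`, `a₁₆ = a₃₃`, `a₂₅ = a₃₄`, `a₂₆ = a₃₅`,
`a₄₆ = a₅₅` (1-based indexing). -/
def memC (A : Matrix (Fin 6) (Fin 6) ℝ) : Prop :=
  A.PosSemidef ∧ A 0 3 = A 1 1 ∧ A 0 4 = A 1 2 ∧ A 0 5 = A 2 2 ∧
    A 1 4 = A 2 3 ∧ A 1 5 = A 2 4 ∧ A 3 5 = A 4 4

lemma v_eq (w : Fin 6 → ℝ) (x y z : ℝ) (h0 : x ^ 2 = w 0) (h1 : x * y = w 1)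
    (h2 : x * z = w 2) (h3 : y ^ 2 = w 3) (h4 : y * z = w 4) (h5 : z ^ 2 = w 5) :
    v x y z = w := by
  funext i
  fin_cases i
  · exact h0
  · exact h1
  · exact h2
  · exact h3
  · exact h4
  · exact h5

lemma key' (w : Fin 6 → ℝ)
    (h1 : w 0 * w 3 = w 1 * w 1) (h2 : w 0 * w 4 = w 1 * w 2)
    (h3 : w 0 * w 5 = w 2 * w 2) (h6 : w 3 * w 5 = w 4 * w 4)
    (ha : 0 ≤ w 0) (hd : 0 ≤ w 3) (hf : 0 ≤ w 5) :
    ∃ x y z : ℝ, v x y z = w := by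
  rcases eq_or_lt_of_le ha with ha0 | ha0
  · -- w 0 = 0
    have hw1 : w 1 = 0 := by nlinarith [sq_nonneg (w 1)]
    have hw2 : w 2 = 0 := by nlinarith [sq_nonneg (w 2)]
    rcases eq_or_lt_of_le hd with hd0 | hd0
    · -- w 3 = 0
      have hw4 : w 4 = 0 := by nlinarith [sq_nonneg (w 4)]
      exact ⟨0, 0, Real.sqrt (w 5),
        v_eq w _ _ _ (by simpa using ha0) (by simp [hw1]) (by simp [hw2])
          (by simpa using hd0) (by simp [hw4]) (Real.sq_sqrt hf)⟩
    · -- w 3 > 0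
      have hs : Real.sqrt (w 3) ^ 2 = w 3 := Real.sq_sqrt hd0.le
      have hsne : Real.sqrt (w 3) ≠ 0 := by positivity
      refine ⟨0, Real.sqrt (w 3), w 4 / Real.sqrt (w 3),
        v_eq w _ _ _ (by simpa using ha0) (by simp [hw1]) (by simp [hw2]) hs
          (by field_simp) ?_⟩
      rw [div_pow, hs, div_eq_iff (ne_of_gt hd0)]
      linear_combination -h6
  · -- w 0 > 0
    have hs : Real.sqrt (w 0) ^ 2 = w 0 := Real.sq_sqrt ha0.le
    have hsne : Real.sqrt (w 0) ≠ 0 := by positivity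
    refine ⟨Real.sqrt (w 0), w 1 / Real.sqrt (w 0), w 2 / Real.sqrt (w 0),
      v_eq w _ _ _ hs (by field_simp) (by field_simp) ?_ ?_ ?_⟩
    · rw [div_pow, hs, div_eq_iff (ne_of_gt ha0)]
      linear_combination -h1
    · rw [div_mul_div_comm, ← sq, hs, div_eq_iff (ne_of_gt ha0)]
      linear_combination -h2
    · rw [div_pow, hs, div_eq_iff (ne_of_gt ha0)]
      linear_combination -h3

lemma key (w : Fin 6 → ℝ)
    (h1 : w 0 * w 3 = w 1 * w 1) (h2 : w 0 * w 4 = w 1 * w 2)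
    (h3 : w 0 * w 5 = w 2 * w 2) (h6 : w 3 * w 5 = w 4 * w 4) :
    ∃ x y z : ℝ, v x y z = w ∨ v x y z = -w := by
  have p13 : 0 ≤ w 0 * w 3 := h1 ▸ mul_self_nonneg _
  have p15 : 0 ≤ w 0 * w 5 := h3 ▸ mul_self_nonneg _
  have p35 : 0 ≤ w 3 * w 5 := h6 ▸ mul_self_nonneg _
  have hsign : (0 ≤ w 0 ∧ 0 ≤ w 3 ∧ 0 ≤ w 5) ∨ (w 0 ≤ 0 ∧ w 3 ≤ 0 ∧ w 5 ≤ 0) := by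
    rcases lt_trichotomy (w 0) 0 with h | h | h
    · exact Or.inr ⟨h.le, by nlinarith, by nlinarith⟩
    · rcases lt_trichotomy (w 3) 0 with h' | h' | h'
      · exact Or.inr ⟨h.le, h'.le, by nlinarith⟩
      · rcases le_total 0 (w 5) with h'' | h''
        · exact Or.inl ⟨h.ge, h'.ge, h''⟩
        · exact Or.inr ⟨h.le, h'.le, h''⟩
      · exact Or.inl ⟨h.ge, h'.le, by nlinarith⟩
    · exact Or.inl ⟨h.le, by nlinarith, by nlinarith⟩
  rcases hsign with ⟨ha, hd, hf⟩ | ⟨ha, hd, hf⟩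
  · obtain ⟨x, y, z, hxyz⟩ := key' w h1 h2 h3 h6 ha hd hf
    exact ⟨x, y, z, Or.inl hxyz⟩
  · obtain ⟨x, y, z, hxyz⟩ := key' (-w)
      (by simpa using h1) (by simpa using h2) (by simpa using h3) (by simpa using h6)
      (by simpa using ha) (by simpa using hd) (by simpa using hf)
    exact ⟨x, y, z, Or.inr hxyz⟩

/-- Every rank one element of the cone 𝒞 has the form `v(x,y,z) v(x,y,z)ᵀ`. -/
theorem rank_one_memC (A : Matrix (Fin 6) (Fin 6) ℝ) (hA : memC A)
    (hrank : A.rank = 1) :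
    ∃ x y z : ℝ, A = vecMulVec (v x y z) (v x y z) := by
  obtain ⟨hpsd, c1, c2, c3, c4, c5, c6⟩ := hA
  rw [Matrix.rank] at hrank
  obtain ⟨u, hu0, hu⟩ := finrank_eq_one_iff'.mp hrank
  have hcol : ∀ k : Fin 6, ∃ c : ℝ, ∀ j, c * u.val j = A j k := by
    intro k
    obtain ⟨c, hc⟩ := hu ⟨A.mulVec (Pi.single k 1), ⟨Pi.single k 1, by simp [mulVecLin_apply]⟩⟩
    refine ⟨c, fun j => ?_⟩
    have := congrArg (fun t => t.val j) hc
    simpa [mulVec_single] using this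
  choose s hs using hcol
  have hune : (u : Fin 6 → ℝ) ≠ 0 := fun h => hu0 (Subtype.ext h)
  obtain ⟨j0, hj0⟩ := Function.ne_iff.mp hune
  set U : Fin 6 → ℝ := u.val with hU
  have hj0' : U j0 ≠ 0 := by simpa using hj0
  have hsym : ∀ i j, A i j = A j i := fun i j => by simpa using (hpsd.1.apply i j).symm
  have hss : ∀ j k, s k * U j = s j * U k := fun j k => by
    rw [hs k j, hs j k, hsym]
  set c := s j0 / U j0 with hc
  have hA' : ∀ j k, A j k = c * U j * U k := by
    intro j k
    have e1 : s k * U j0 = s j0 * U k := hss j0 k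
    rw [← hs k j, hc, div_mul_eq_mul_div, div_mul_eq_mul_div, eq_div_iff hj0']
    linear_combination U j * e1
  have hdiag : 0 ≤ A j0 j0 := by
    have := hpsd.dotProduct_mulVec_nonneg (Pi.single j0 1)
    simpa [mulVec_single, dotProduct, Pi.single_apply, Finset.sum_ite_eq'] using this
  have hcnn : 0 ≤ c := by
    have h0 := hA' j0 j0
    have hq : 0 < U j0 * U j0 := mul_self_pos.mpr hj0'
    nlinarith
  set w : Fin 6 → ℝ := fun i => Real.sqrt c * U i with hw
  have hAw : ∀ i j, A i j = w i * w j := by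
    intro i j
    rw [hA' i j, hw]
    have hcc := Real.mul_self_sqrt hcnn
    simp only
    linear_combination (-(U i * U j)) * hcc
  obtain ⟨x, y, z, hxyz⟩ := key w
    (by rw [← hAw, ← hAw, c1])
    (by rw [← hAw, ← hAw, c2])
    (by rw [← hAw, ← hAw, c3])
    (by rw [← hAw, ← hAw, c6])
  refine ⟨x, y, z, ?_⟩
  ext i j
  rw [vecMulVec_apply]
  rcases hxyz with h | h <;> rw [h]
  · exact hAw i j
  · simp only [Pi.neg_apply, neg_mul_neg]
    exact hAw i j
end

section
/- No element of the cone 𝒞 of rank at least 4 generates an extreme ray: if A ∈ 𝒞 has rank ≥ 4, then there exist B, C ∈ 𝒞 with A = B + C such that B is not a nonnegative scalar multiple of A. -/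
open Matrix

/-!
For `A ⪰ 0` and a Hermitian `N`, the matrix `A N A` is a direction in which `A` can be moved both
ways inside the positive semidefinite cone: with `R = √A`, `A ± t A N A = R (1 ± t R N R) R`, and
`1 ± t R N R ⪰ 0` for small `t`. If `A` has `k` independent columns `W = A Y`, the matrices
`W M Wᵀ = A (Y M Yᵀ) A` with `M` a symmetric `k × k` matrix form a space of dimension
`k (k + 1) / 2`, which is `10` for `k = 4`. The six linear constraints cut it down to a space of
dimension at least `4`, so it contains some `D` that is not a multiple of `A`, and
`A = ½ (A + ε D) + ½ (A - ε D)` is a decomposition inside 𝒞 that is not along the ray of `A`.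
-/

open Module
open scoped MatrixOrder

section

variable {ι m R : Type*}

def Matrix.ofSym2 [Semiring R] : (Sym2 ι → R) →ₗ[R] Matrix ι ι R where
  toFun c := of fun i j => c s(i, j)
  map_add' _ _ := rfl
  map_smul' _ _ := rfl

lemma Matrix.ofSym2_apply [Semiring R] (c : Sym2 ι → R) (i j : ι) :
    ofSym2 c i j = c s(i, j) := rfl

lemma Matrix.ofSym2_isHermitian [Semiring R] [StarRing R] [TrivialStar R] (c : Sym2 ι → R) :
    (ofSym2 c).IsHermitian := by
  ext i j
  simp [ofSym2_apply, Sym2.eq_swap]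

lemma Matrix.ofSym2_injective [Semiring R] :
    Function.Injective (ofSym2 : (Sym2 ι → R) →ₗ[R] Matrix ι ι R) := by
  intro c d h
  funext z
  induction z using Sym2.ind with
  | _ i j => exact congrFun (congrFun h i) j

variable [Fintype ι] [DecidableEq ι] [Fintype m] [Field R]

lemma Matrix.exists_mul_eq_one_of_injective_mulVec {W : Matrix m ι R}
    (hW : Function.Injective W.mulVec) : ∃ L : Matrix ι m R, L * W = 1 := by
  classical
  obtain ⟨g, hg⟩ := W.mulVecLin.exists_leftInverse_of_injective (LinearMap.ker_eq_bot.mpr hW)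
  refine ⟨LinearMap.toMatrix' g, ?_⟩
  rw [← LinearMap.toMatrix'_toLin' W, ← LinearMap.toMatrix'_comp, toLin'_apply', hg,
    LinearMap.toMatrix'_id]

lemma Matrix.injective_mul_mul_conjTranspose [StarRing R] {W : Matrix m ι R}
    (hW : Function.Injective W.mulVec) :
    Function.Injective fun M : Matrix ι ι R => W * M * Wᴴ := by
  obtain ⟨L, hL⟩ := exists_mul_eq_one_of_injective_mulVec hW
  refine Function.LeftInverse.injective (g := fun X => L * X * Lᴴ) fun M => ?_
  calc L * (W * M * Wᴴ) * Lᴴ = (L * W) * M * (L * W)ᴴ := by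
        simp only [conjTranspose_mul, Matrix.mul_assoc]
    _ = M := by simp [hL]

end

lemma Matrix.exists_injective_mulVec_mul_of_le_rank {m n K : Type*} [Fintype n] [Field K]
    {A : Matrix m n K} {k : ℕ} (hk : k ≤ A.rank) :
    ∃ Y : Matrix n (Fin k) K, Function.Injective (A * Y).mulVec := by
  obtain ⟨f, hf⟩ := exists_linearIndependent_of_le_finrank hk
  choose y hy using fun j => LinearMap.mem_range.mp (f j).2
  have hcol : (A * (of y)ᵀ).col = fun j => (f j : m → K) := by
    ext i j
    simp [← hy, col, mul_apply, mulVec, dotProduct]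
  exact ⟨(of y)ᵀ, mulVec_injective_iff.mpr (hcol ▸ hf.map' _ (Submodule.ker_subtype _))⟩

lemma Submodule.exists_mem_ker_notMem_span_singleton {K V P : Type*} [Field K] [AddCommGroup V]
    [Module K V] [AddCommGroup P] [Module K P] [FiniteDimensional K P]
    (U : Submodule K V) [FiniteDimensional K U] (L : V →ₗ[K] P) (a : V)
    (hU : finrank K P + 1 < finrank K U) :
    ∃ d ∈ U, L d = 0 ∧ d ∉ K ∙ a := by
  have hker : 1 < finrank K ((LinearMap.ker (L.domRestrict U)).map U.subtype) := by
    have := (L.domRestrict U).finrank_range_add_finrank_ker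
    have := Submodule.finrank_le (LinearMap.range (L.domRestrict U))
    rw [Submodule.finrank_map_subtype_eq]
    omega
  have hspan : finrank K (K ∙ a) ≤ 1 := by simpa using finrank_span_le_card ({a} : Set V)
  obtain ⟨d, hdN, hd⟩ := SetLike.not_le_iff_exists.mp
    fun hle => (Submodule.finrank_mono hle).trans hspan |>.not_gt hker
  obtain ⟨⟨d, hdU⟩, hdL, rfl⟩ := Submodule.mem_map.mp hdN
  exact ⟨d, hdU, hdL, hd⟩

lemma Matrix.exists_nontrivial_decomp_of_perturb {n P : Type*} [AddCommGroup P]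
    [Module ℝ P] {A D : Matrix n n ℝ} (L : Matrix n n ℝ →ₗ[ℝ] P) (hLA : L A = 0)
    (hLD : L D = 0) (hDA : D ∉ ℝ ∙ A) {ε : ℝ} (hε : 0 < ε)
    (hpos : ∀ t : ℝ, |t| ≤ ε → (A + t • D).PosSemidef) :
    ∃ B C : Matrix n n ℝ, B.PosSemidef ∧ L B = 0 ∧ C.PosSemidef ∧ L C = 0 ∧ A = B + C ∧
      B ∉ ℝ ∙ A := by
  refine ⟨(1 / 2 : ℝ) • (A + ε • D), (1 / 2 : ℝ) • (A + (-ε) • D),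
    (hpos ε (abs_of_pos hε).le).smul (by norm_num), by simp [hLA, hLD],
    (hpos (-ε) (by rw [abs_neg, abs_of_pos hε])).smul (by norm_num), by simp [hLA, hLD],
    by module, fun hB => hDA ?_⟩
  have hD : D = ε⁻¹ • ((2 : ℝ) • ((1 / 2 : ℝ) • (A + ε • D)) - A) := by
    rw [show (2 : ℝ) • ((1 / 2 : ℝ) • (A + ε • D)) - A = ε • D by module,
      inv_smul_smul₀ hε.ne']
  rw [hD]
  exact Submodule.smul_mem _ _
    (sub_mem (Submodule.smul_mem _ _ hB) (Submodule.mem_span_singleton_self A))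

section

variable {n : Type*} [Fintype n] [DecidableEq n]

lemma Matrix.IsHermitian.exists_pos_posSemidef_one_add_smul {S : Matrix n n ℝ}
    (hS : S.IsHermitian) : ∃ ε > 0, ∀ t : ℝ, |t| ≤ ε → (1 + t • S).PosSemidef := by
  obtain ⟨M, hM⟩ := (S.finite_spectrum.image abs).bddAbove
  have hSa : IsSelfAdjoint S := hS
  refine ⟨1 / (|M| + 1), by positivity, fun t ht => ?_⟩
  rw [← nonneg_iff_posSemidef, ← cfc_id' ℝ S, ← cfc_const_mul .., ← cfc_const_one ℝ S,
    ← cfc_add ..]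
  refine cfc_nonneg fun x hx => ?_
  have hx : |x| ≤ |M| := (hM ⟨x, hx, rfl⟩).trans (le_abs_self M)
  have : |t * x| < 1 := by
    rw [abs_mul]
    calc |t| * |x| ≤ 1 / (|M| + 1) * |M| := by gcongr
      _ < 1 := by rw [div_mul_eq_mul_div, one_mul, div_lt_one (by positivity)]; linarith
  linarith [neg_abs_le (t * x)]

lemma Matrix.PosSemidef.exists_pos_posSemidef_add_smul_mul_mul_self {A N : Matrix n n ℝ}
    (hA : A.PosSemidef) (hN : N.IsHermitian) :
    ∃ ε > 0, ∀ t : ℝ, |t| ≤ ε → (A + t • (A * N * A)).PosSemidef := by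
  set R := CFC.sqrt A
  have hR : Rᴴ = R := (CFC.sqrt_nonneg A).posSemidef.isHermitian
  have hRR : R * R = A := CFC.sqrt_mul_sqrt_self A hA.nonneg
  obtain ⟨ε, hε, hpos⟩ :=
    (isHermitian_conjTranspose_mul_mul R hN).exists_pos_posSemidef_one_add_smul
  refine ⟨ε, hε, fun t ht => ?_⟩
  convert (hpos t ht).conjTranspose_mul_mul_same R using 1
  simp only [hR, Matrix.mul_add, Matrix.add_mul, Matrix.mul_smul, Matrix.smul_mul,
    Matrix.mul_one, ← hRR, Matrix.mul_assoc]

theorem Matrix.PosSemidef.exists_nontrivial_decomp_of_choose_lt {P : Type*} [AddCommGroup P]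
    [Module ℝ P] [FiniteDimensional ℝ P] {A : Matrix n n ℝ} (hA : A.PosSemidef)
    (L : Matrix n n ℝ →ₗ[ℝ] P) (hLA : L A = 0) {k : ℕ} (hk : k ≤ A.rank)
    (hdim : finrank ℝ P + 1 < (k + 1).choose 2) :
    ∃ B C : Matrix n n ℝ, B.PosSemidef ∧ L B = 0 ∧ C.PosSemidef ∧ L C = 0 ∧ A = B + C ∧
      B ∉ ℝ ∙ A := by
  obtain ⟨Y, hY⟩ := exists_injective_mulVec_mul_of_le_rank hk
  let Ψ : (Sym2 (Fin k) → ℝ) →ₗ[ℝ] Matrix n n ℝ :=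
    mulRightLinearMap n ℝ (A * Y)ᴴ ∘ₗ mulLeftLinearMap (Fin k) ℝ (A * Y) ∘ₗ ofSym2
  have hΨ : finrank ℝ (LinearMap.range Ψ) = (k + 1).choose 2 := by
    rw [LinearMap.finrank_range_of_inj
      ((injective_mul_mul_conjTranspose hY).comp ofSym2_injective)]
    simp [Sym2.card]
  obtain ⟨D, ⟨c, rfl⟩, hLD, hDA⟩ :=
    (LinearMap.range Ψ).exists_mem_ker_notMem_span_singleton L A (hΨ ▸ hdim)
  have hΨc : Ψ c = A * (Y * ofSym2 c * Yᴴ) * A := by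
    simp only [Ψ, LinearMap.comp_apply, mulLeftLinearMap_apply, mulRightLinearMap_apply,
      conjTranspose_mul, hA.isHermitian.eq, Matrix.mul_assoc]
  obtain ⟨ε, hε, hpos⟩ := hA.exists_pos_posSemidef_add_smul_mul_mul_self
    (isHermitian_mul_mul_conjTranspose Y (ofSym2_isHermitian c))
  exact exists_nontrivial_decomp_of_perturb L hLA hLD hDA hε (hΨc ▸ hpos)

end

def coneConstraints : Matrix (Fin 6) (Fin 6) ℝ →ₗ[ℝ] Fin 6 → ℝ where
  toFun M := ![M 0 3 - M 1 1, M 0 4 - M 1 2, M 0 5 - M 2 2, M 1 4 - M 2 3, M 1 5 - M 2 4,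
    M 3 5 - M 4 4]
  map_add' M N := by ext i; fin_cases i <;> simp <;> ring
  map_smul' r M := by ext i; fin_cases i <;> simp <;> ring

lemma memC_iff {M : Matrix (Fin 6) (Fin 6) ℝ} :
    memC M ↔ M.PosSemidef ∧ coneConstraints M = 0 := by
  simp [memC, coneConstraints, funext_iff, Fin.forall_fin_succ, sub_eq_zero]

/-- No element of the cone 𝒞 of rank at least 4 generates an extreme ray. -/
theorem rank_ge_four_not_extreme (A : Matrix (Fin 6) (Fin 6) ℝ) (hA : memC A)
    (hrank : 4 ≤ A.rank) :
    ∃ B C : Matrix (Fin 6) (Fin 6) ℝ, memC B ∧ memC C ∧ A = B + C ∧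
      ¬∃ s : ℝ, 0 ≤ s ∧ B = s • A := by
  obtain ⟨hpsd, hcon⟩ := memC_iff.mp hA
  obtain ⟨B, C, hB, hLB, hC, hLC, hBC, hBA⟩ :=
    hpsd.exists_nontrivial_decomp_of_choose_lt coneConstraints hcon hrank (by simp [Nat.choose])
  refine ⟨B, C, memC_iff.mpr ⟨hB, hLB⟩, memC_iff.mpr ⟨hC, hLC⟩, hBC, ?_⟩
  rintro ⟨s, -, rfl⟩
  exact hBA (Submodule.smul_mem _ s (Submodule.mem_span_singleton_self A))
end

section
/- Every rank 2 element of the cone 𝒞 is a sum of two rank 1 elements of the prescribed form: if A ∈ 𝒞 has rank 2, then there exist real numbers x, y, z and x̂, ŷ, ẑ such that A = v(x,y,z) v(x,y,z)^⊤ + v(x̂,ŷ,ẑ) v(x̂,ŷ,ẑ)^⊤. -/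
open Matrix

/-!
Write `A = u uᵀ + w wᵀ` and read `u, w ∈ ℝ⁶` as symmetric `3 × 3` matrices `U, W`, so that
`v(x,y,z)` becomes `(x,y,z)(x,y,z)ᵀ`. The six linear constraints of `𝒞` then say exactly
`adj U + adj W = 0`. Since `adj` is quadratic on `3 × 3` matrices, this relation survives the
rotation `(U, W) ↦ (cU + sW, -sU + cW)`, and in odd dimension it forces `det U = 0`
(`det (adj U) = (det U)²` while `det (adj W) = -det (adj U)`). Hence every `cU + sW` is singular
and `N = adj (cU + sW)` has vanishing adjugate. Choosing the rotation with `tr N = 0` gives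
`tr N² = (tr N)² - 2 tr (adj N) = 0`, so `N = 0`, and then `adj (-sU + cW) = -N = 0` as well.
A symmetric matrix with vanishing adjugate is `±a aᵀ`, i.e. `±v(x,y,z)`, and the rotation leaves
`u uᵀ + w wᵀ` unchanged.
-/

theorem Matrix.PosSemidef.eq_sum_vecMulVec_sqrt_eigenvalues {n : Type*} [Fintype n]
    [DecidableEq n] {A : Matrix n n ℝ} (hA : A.PosSemidef) :
    A = ∑ k, vecMulVec (√(hA.isHermitian.eigenvalues k) • ⇑(hA.isHermitian.eigenvectorBasis k))
      (√(hA.isHermitian.eigenvalues k) • ⇑(hA.isHermitian.eigenvectorBasis k)) := by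
  conv_lhs => rw [hA.isHermitian.spectral_theorem, Unitary.conjStarAlgAut_apply]
  ext i j
  simp only [mul_apply, Matrix.sum_apply, vecMulVec_apply, Pi.smul_apply, smul_eq_mul]
  refine Finset.sum_congr rfl fun k _ => ?_
  have hsqrt := Real.mul_self_sqrt (hA.eigenvalues_nonneg k)
  simp only [IsHermitian.eigenvectorUnitary_apply, RCLike.ofReal_real_eq_id, CompTriple.comp_eq,
    diagonal_apply, mul_ite, mul_zero, Finset.sum_ite_eq', Finset.mem_univ, ↓reduceIte, star_apply,
    star_trivial]
  linear_combination (-(hA.isHermitian.eigenvectorBasis k i * hA.isHermitian.eigenvectorBasis k j))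
    * hsqrt

theorem Matrix.PosSemidef.exists_eq_sum_vecMulVec_of_rank_eq {n : Type*} [Fintype n]
    [DecidableEq n] {A : Matrix n n ℝ} (hA : A.PosSemidef) {r : ℕ} (hr : A.rank = r) :
    ∃ u : Fin r → n → ℝ, A = ∑ i, vecMulVec (u i) (u i) := by
  set μ := hA.isHermitian.eigenvalues
  set e := hA.isHermitian.eigenvectorBasis
  have hcard : Fintype.card {k // μ k ≠ 0} = r :=
    hr ▸ hA.isHermitian.rank_eq_card_non_zero_eigs.symm
  let σ := Fintype.equivFinOfCardEq hcard
  refine ⟨fun i => √(μ (σ.symm i)) • ⇑(e (σ.symm i)), ?_⟩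
  conv_lhs => rw [hA.eq_sum_vecMulVec_sqrt_eigenvalues]
  rw [← Finset.sum_filter_of_ne (p := fun k => μ k ≠ 0),
    Finset.sum_subtype (p := fun k => μ k ≠ 0) _ (fun k => by simp)]
  · exact Fintype.sum_equiv σ _ _ (fun k => by simp only [Equiv.symm_apply_apply]; rfl)
  · intro k _ hk h
    simp [μ, h] at hk

theorem Matrix.vecMulVec_rotate_add {R n : Type*} [CommRing R] {c s : R}
    (hcs : c ^ 2 + s ^ 2 = 1) (u w : n → R) :
    vecMulVec (c • u + s • w) (c • u + s • w) + vecMulVec ((-s) • u + c • w) ((-s) • u + c • w)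
      = vecMulVec u u + vecMulVec w w := by
  ext i j
  simp only [Matrix.add_apply, vecMulVec_apply, Pi.add_apply, Pi.smul_apply, smul_eq_mul]
  linear_combination (u i * u j + w i * w j) * hcs

theorem Matrix.det_eq_zero_of_adjugate_add_adjugate_eq_zero {n K : Type*} [Fintype n]
    [DecidableEq n] [Field K] [LinearOrder K] [IsStrictOrderedRing K]
    (hn : Odd (Fintype.card n)) {U W : Matrix n n K} (h : adjugate U + adjugate W = 0) :
    det U = 0 := by
  have hk : Even (Fintype.card n - 1) := hn.tsub_odd odd_one
  have hsum : det U ^ (Fintype.card n - 1) + det W ^ (Fintype.card n - 1) = 0 := by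
    rw [← det_adjugate, ← det_adjugate, eq_neg_of_add_eq_zero_right h, det_neg, hn.neg_one_pow]
    ring
  exact eq_zero_of_pow_eq_zero
    ((add_eq_zero_iff_of_nonneg (hk.pow_nonneg _) (hk.pow_nonneg _)).mp hsum).1

theorem Matrix.adjugate_smul_add_smul_fin_three {R : Type*} [CommRing R] (c s : R)
    (U W : Matrix (Fin 3) (Fin 3) R) :
    adjugate (c • U + s • W) = c ^ 2 • adjugate U + s ^ 2 • adjugate W
      + (c * s) • (adjugate (U + W) - adjugate U - adjugate W) := by
  ext i j
  fin_cases i <;> fin_cases j <;> simp [adjugate_fin_three] <;> ring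

theorem Matrix.adjugate_rotate_add_fin_three {R : Type*} [CommRing R] (c s : R)
    (U W : Matrix (Fin 3) (Fin 3) R) :
    adjugate (c • U + s • W) + adjugate ((-s) • U + c • W)
      = (c ^ 2 + s ^ 2) • (adjugate U + adjugate W) := by
  rw [adjugate_smul_add_smul_fin_three, adjugate_smul_add_smul_fin_three]
  module

theorem Matrix.trace_mul_self_fin_three {R : Type*} [CommRing R] (M : Matrix (Fin 3) (Fin 3) R) :
    trace (M * M) = trace M ^ 2 - 2 * trace (adjugate M) := by
  simp only [trace_fin_three, mul_apply, Fin.sum_univ_three, adjugate_fin_three, of_apply,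
    cons_val', cons_val_zero, cons_val_fin_one, cons_val_one, cons_val]
  ring

theorem Matrix.IsSymm.eq_zero_of_trace_eq_zero_of_trace_adjugate_eq_zero
    {M : Matrix (Fin 3) (Fin 3) ℝ} (hM : M.IsSymm)
    (h₁ : trace M = 0) (h₂ : trace M.adjugate = 0) : M = 0 := by
  rw [← trace_mul_conjTranspose_self_eq_zero_iff, conjTranspose_eq_transpose_of_trivial, hM.eq,
    trace_mul_self_fin_three, h₁, h₂]
  ring

theorem Real.exists_sq_add_sq_eq_one_and_sq_sub_sq_mul_add_mul_mul_eq_zero (a b : ℝ) :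
    ∃ c s : ℝ, c ^ 2 + s ^ 2 = 1 ∧ (c ^ 2 - s ^ 2) * a + c * s * b = 0 := by
  set z : ℂ := ⟨b, -2 * a⟩
  by_cases hz : z = 0
  · obtain ⟨-, ha⟩ : b = 0 ∧ a = 0 := by simpa [z, Complex.ext_iff] using hz
    exact ⟨1, 0, by norm_num, by simp [ha]⟩
  set θ := z.arg / 2
  have hcos : cos (2 * θ) = b / ‖z‖ := by
    rw [show 2 * θ = z.arg by ring, Complex.cos_arg hz]
  have hsin : sin (2 * θ) = -2 * a / ‖z‖ := by
    rw [show 2 * θ = z.arg by ring, Complex.sin_arg]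
  rw [cos_two_mul] at hcos
  rw [sin_two_mul] at hsin
  refine ⟨cos θ, sin θ, cos_sq_add_sin_sq θ, ?_⟩
  linear_combination a * hcos + b / 2 * hsin - a * cos_sq_add_sin_sq θ

theorem Matrix.exists_rotate_adjugate_eq_zero {U W : Matrix (Fin 3) (Fin 3) ℝ} (hU : U.IsSymm)
    (hW : W.IsSymm) (h : adjugate U + adjugate W = 0) :
    ∃ c s : ℝ, c ^ 2 + s ^ 2 = 1 ∧
      adjugate (c • U + s • W) = 0 ∧ adjugate ((-s) • U + c • W) = 0 := by
  have hdet : ∀ c s : ℝ, det (c • U + s • W) = 0 := fun c s =>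
    det_eq_zero_of_adjugate_add_adjugate_eq_zero (by decide)
      (by rw [adjugate_rotate_add_fin_three, h, smul_zero])
  have hpencil : ∀ c s : ℝ,
      adjugate (c • U + s • W) = (c ^ 2 - s ^ 2) • adjugate U + (c * s) • adjugate (U + W) := by
    intro c s
    rw [adjugate_smul_add_smul_fin_three, eq_neg_of_add_eq_zero_right h]
    module
  obtain ⟨c, s, hcs, htrace⟩ :=
    Real.exists_sq_add_sq_eq_one_and_sq_sub_sq_mul_add_mul_mul_eq_zero
      (trace (adjugate U)) (trace (adjugate (U + W)))
  have hN : adjugate (c • U + s • W) = 0 := by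
    refine ((hU.smul c).add (hW.smul s)).adjugate.eq_zero_of_trace_eq_zero_of_trace_adjugate_eq_zero
      ?_ ?_
    · rw [hpencil, trace_add, trace_smul, trace_smul, smul_eq_mul, smul_eq_mul, htrace]
    · rw [adjugate_adjugate _ (by decide), hdet, zero_pow (by decide), zero_smul, trace_zero]
  refine ⟨c, s, hcs, hN, ?_⟩
  simpa [hN, h] using adjugate_rotate_add_fin_three c s U W

def sym3 : (Fin 6 → ℝ) →ₗ[ℝ] Matrix (Fin 3) (Fin 3) ℝ where
  toFun p := !![p 0, p 1, p 2; p 1, p 3, p 4; p 2, p 4, p 5]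
  map_add' p q := by ext i j; fin_cases i <;> fin_cases j <;> rfl
  map_smul' c p := by ext i j; fin_cases i <;> fin_cases j <;> rfl

theorem isSymm_sym3 (p : Fin 6 → ℝ) : (sym3 p).IsSymm := by
  ext i j; fin_cases i <;> fin_cases j <;> rfl

theorem adjugate_sym3_add_adjugate_sym3_eq_zero_of_memC {u w : Fin 6 → ℝ}
    (h : memC (vecMulVec u u + vecMulVec w w)) : adjugate (sym3 u) + adjugate (sym3 w) = 0 := by
  obtain ⟨-, h₀₃, h₀₄, h₀₅, h₁₄, h₁₅, h₃₅⟩ := h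
  simp only [Matrix.add_apply, vecMulVec_apply] at h₀₃ h₀₄ h₀₅ h₁₄ h₁₅ h₃₅
  ext i j
  fin_cases i <;> fin_cases j <;> simp [adjugate_fin_three, sym3] <;> linarith

theorem v_mul_mul_mul (t x y z : ℝ) : v (t * x) (t * y) (t * z) = t ^ 2 • v x y z := by
  funext i; fin_cases i <;> simp [v] <;> ring

theorem exists_v_eq_or_neg_v_eq_smul_v (m x y z : ℝ) :
    ∃ x' y' z', v x' y' z' = m • v x y z ∨ -v x' y' z' = m • v x y z := by
  have ht : √|m| ^ 2 = |m| := Real.sq_sqrt (abs_nonneg m)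
  refine ⟨√|m| * x, √|m| * y, √|m| * z, ?_⟩
  rw [v_mul_mul_mul, ht]
  rcases abs_choice m with hm | hm <;> rw [hm]
  · exact .inl rfl
  · exact .inr (by rw [neg_smul, neg_neg])

theorem exists_v_eq_or_neg_v_eq_of_adjugate_sym3_eq_zero {p : Fin 6 → ℝ}
    (h : adjugate (sym3 p) = 0) : ∃ x y z, v x y z = p ∨ -v x y z = p := by
  have hm : ∀ i j, adjugate (sym3 p) i j = 0 := fun i j => by rw [h]; rfl
  have h₀₀ := hm 0 0
  have h₁₁ := hm 1 1
  have h₂₂ := hm 2 2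
  have h₀₁ := hm 0 1
  have h₀₂ := hm 0 2
  have h₁₂ := hm 1 2
  simp only [sym3, LinearMap.coe_mk, AddHom.coe_mk, adjugate_fin_three, of_apply, cons_val',
    cons_val_one, cons_val_zero, cons_val_fin_one, cons_val] at h₀₀ h₁₁ h₂₂ h₀₁ h₀₂ h₁₂
  suffices ∃ m x y z : ℝ, p = m • v x y z by
    obtain ⟨m, x, y, z, rfl⟩ := this
    exact exists_v_eq_or_neg_v_eq_smul_v m x y z
  by_cases hp₀ : p 0 = 0
  swap
  · refine ⟨(p 0)⁻¹, p 0, p 1, p 2, ?_⟩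
    funext i; fin_cases i <;> simp [v] <;> field_simp <;> grind
  by_cases hp₃ : p 3 = 0
  swap
  · refine ⟨(p 3)⁻¹, p 1, p 3, p 4, ?_⟩
    funext i; fin_cases i <;> simp [v] <;> field_simp <;> grind
  by_cases hp₅ : p 5 = 0
  swap
  · refine ⟨(p 5)⁻¹, p 2, p 4, p 5, ?_⟩
    funext i; fin_cases i <;> simp [v] <;> field_simp <;> grind
  refine ⟨0, 0, 0, 0, ?_⟩
  funext i; fin_cases i <;> simp <;> grind

/-- Every rank two element of the cone 𝒞 is a sum of two rank one matrices of
the form `v(x,y,z) v(x,y,z)ᵀ`. -/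
theorem rank_two_memC (A : Matrix (Fin 6) (Fin 6) ℝ) (hA : memC A)
    (hrank : A.rank = 2) :
    ∃ x y z x' y' z' : ℝ,
      A = vecMulVec (v x y z) (v x y z) + vecMulVec (v x' y' z') (v x' y' z') := by
  obtain ⟨u, hu⟩ := hA.1.exists_eq_sum_vecMulVec_of_rank_eq hrank
  rw [Fin.sum_univ_two] at hu
  subst hu
  obtain ⟨c, s, hcs, hP, hQ⟩ := exists_rotate_adjugate_eq_zero (isSymm_sym3 (u 0))
    (isSymm_sym3 (u 1)) (adjugate_sym3_add_adjugate_sym3_eq_zero_of_memC hA)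
  rw [← map_smul, ← map_smul, ← map_add] at hP hQ
  obtain ⟨x, y, z, hP⟩ := exists_v_eq_or_neg_v_eq_of_adjugate_sym3_eq_zero hP
  obtain ⟨x', y', z', hQ⟩ := exists_v_eq_or_neg_v_eq_of_adjugate_sym3_eq_zero hQ
  refine ⟨x, y, z, x', y', z', ?_⟩
  rw [← vecMulVec_rotate_add hcs]
  rcases hP with hP | hP <;> rcases hQ with hQ | hQ <;> rw [← hP, ← hQ] <;> simp
end
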